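/- arXiv:1503.07632 — 4 statements merged into one kernel-verified Lean document; each statement's English description precedes it below -/
import Mathlib

section
/- For ρ > 0, α ∈ ℝ, β > -1, n ∈ ℕ₀ and x ∈ (-1,1), the left-sided fractional integral on (-1,1) satisfies I₋^ρ { (1+x)^β P_n^{(α,β)}(x) } = [Γ(n+β+1)/Γ(n+β+ρ+1)] (1+x)^{β+ρ} P_n^{(α-ρ, β+ρ)}(x), where P_n^{(α,β)} is the Jacobi polynomial. -/
open Real Filter Set

/-- Left-sided Riemann–Liouville fractional integral of order `ρ` with base point `a`. -/
noncomputable def fracInt (a ρ : ℝ) (u : ℝ → ℝ) (x : ℝ) : ℝ :=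
  (1 / Real.Gamma ρ) * ∫ y in a..x, u y * (x - y) ^ (ρ - 1)

/-- Left-sided Caputo fractional derivative of order `μ ∈ (k-1,k)` with base point `a`. -/
noncomputable def caputoD (k : ℕ) (μ a : ℝ) (u : ℝ → ℝ) : ℝ → ℝ :=
  fracInt a ((k : ℝ) - μ) (iteratedDeriv k u)

/-- Left-sided Riemann–Liouville fractional derivative of order `μ ∈ (k-1,k)` with base point `a`. -/
noncomputable def rlD (k : ℕ) (μ a : ℝ) (u : ℝ → ℝ) : ℝ → ℝ :=
  iteratedDeriv k (fracInt a ((k : ℝ) - μ) u)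

/-- Jacobi polynomial `P_n^{(α,β)}` for general real parameters, via the terminating
hypergeometric representation. -/
noncomputable def jacobiP (n : ℕ) (α β : ℝ) (x : ℝ) : ℝ :=
  (1 / (n.factorial : ℝ)) * ∑ m ∈ Finset.range (n + 1),
    (n.choose m : ℝ) * (∏ i ∈ Finset.range (n - m), (α + m + 1 + i)) *
    (∏ i ∈ Finset.range m, (α + β + n + 1 + i)) * ((x - 1) / 2) ^ m

/-- Legendre polynomial. -/
noncomputable def legendreP (n : ℕ) (x : ℝ) : ℝ := jacobiP n 0 0 x

/-!
Through the reflection `P_n^{(α,β)}(-x) = (-1)^n P_n^{(β,α)}(x)` (a Chu–Vandermonde computation),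
`(1 + x)^β P_n^{(α,β)}(x)` is a finite combination of powers `(1 + x)^(β + m)`. The fractional
integral of such a power is a Beta integral, `I^ρ (1 + y)^s = Γ(s+1)/Γ(s+ρ+1) (1 + x)^(s+ρ)`.
Coefficientwise, `Γ(β+m+1)/Γ(β+m+ρ+1) (β+m+1)_{n-m} = Γ(n+β+1)/Γ(n+β+ρ+1) (β+ρ+m+1)_{n-m}`, and
`α + β + n + 1` is invariant under `(α, β) ↦ (α - ρ, β + ρ)`, which yields the coefficients of
`(1 + x)^(β+ρ) P_n^{(α-ρ,β+ρ)}(x)`.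
-/

open Finset Polynomial MeasureTheory

section Pochhammer

variable {R : Type*}

theorem ascPochhammer_eval_eq_prod_range [CommSemiring R] (n : ℕ) (r : R) :
    (ascPochhammer R n).eval r = ∏ i ∈ range n, (r + i) := by
  induction n with
  | zero => simp
  | succ n ih => rw [ascPochhammer_succ_eval, ih, prod_range_succ]

theorem ascPochhammer_eval_add_nat [CommSemiring R] (r : R) (m j : ℕ) :
    (ascPochhammer R (m + j)).eval r =
      (ascPochhammer R m).eval r * (ascPochhammer R j).eval (r + m) := by
  rw [← ascPochhammer_mul, eval_mul, eval_comp, eval_add, eval_X, eval_natCast]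

variable [CommRing R]

theorem ascPochhammer_eval_add (a b : R) (n : ℕ) :
    (ascPochhammer R n).eval (a + b) = ∑ ij ∈ antidiagonal n,
      n.choose ij.1 * ((ascPochhammer R ij.1).eval a * (ascPochhammer R ij.2).eval b) := by
  have h (r : R) (k : ℕ) :
      (ascPochhammer R k).eval r = Int.negOnePow k • (descPochhammer ℤ k).smeval (-r) := by
    rw [← ascPochhammer_smeval_eq_eval, ← ascPochhammer_smeval_neg_eq_descPochhammer, neg_neg]
  simp only [h, neg_add]
  rw [Ring.descPochhammer_smeval_add _ (Commute.all (-a) (-b)), smul_sum]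
  refine sum_congr rfl fun ij hij => ?_
  rw [← mem_antidiagonal.mp hij, Nat.cast_add, Int.negOnePow_add, smul_mul_smul_comm,
    mul_smul_comm]

theorem ascPochhammer_eval_neg (r : R) (k : ℕ) :
    (ascPochhammer R k).eval (-r) = (-1) ^ k * (ascPochhammer R k).eval (r - k + 1) := by
  rw [ascPochhammer_eval_neg_eq_descPochhammer, descPochhammer_eval_eq_ascPochhammer]

/-- Since `(-1) ^ (n - j) * (b + j + 1)_(n - j) = (-b - n)_(n - j)`, this is Chu–Vandermonde. -/
theorem sum_choose_mul_neg_one_pow_ascPochhammer (b c : R) (n : ℕ) :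
    ∑ j ∈ range (n + 1), n.choose j * ((-1) ^ (n - j) *
      (ascPochhammer R (n - j)).eval (b + j + 1) * (ascPochhammer R j).eval c) =
      (ascPochhammer R n).eval (c - b - n) := by
  rw [sub_sub, sub_eq_add_neg, ascPochhammer_eval_add, Nat.sum_antidiagonal_eq_sum_range_succ
    (fun i j => n.choose i * ((ascPochhammer R i).eval c * (ascPochhammer R j).eval (-(b + n))))]
  refine sum_congr rfl fun j hj => ?_
  rw [ascPochhammer_eval_neg, Nat.cast_sub (by grind),
    show b + n - (n - j : R) + 1 = b + j + 1 by ring]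
  ring

theorem sum_range_choose_mul_choose (f : ℕ → R) {m n : ℕ} (hm : m ≤ n) :
    ∑ k ∈ range (n + 1), k.choose m * (n.choose k * f k) =
      n.choose m * ∑ j ∈ range (n - m + 1), (n - m).choose j * f (m + j) := by
  rw [show n + 1 = m + (n - m + 1) by omega, sum_range_add, mul_sum,
    sum_eq_zero fun k hk => by rw [Nat.choose_eq_zero_of_lt (mem_range.1 hk)]; simp, zero_add]
  refine sum_congr rfl fun j _ => ?_
  have h := Nat.choose_mul (n := n) (Nat.le_add_right m j)
  rw [Nat.add_sub_cancel_left] at h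
  have h' := congrArg (Nat.cast : ℕ → R) h
  push_cast at h'
  linear_combination f (m + j) * h'

theorem sum_mul_add_one_pow (f : ℕ → R) (u : R) (n : ℕ) :
    ∑ k ∈ range (n + 1), f k * (u + 1) ^ k =
      ∑ m ∈ range (n + 1), (∑ k ∈ range (n + 1), k.choose m * f k) * u ^ m := by
  have h (k : ℕ) (hk : k ∈ range (n + 1)) :
      f k * (u + 1) ^ k = ∑ m ∈ range (n + 1), k.choose m * f k * u ^ m := by
    rw [add_pow, mul_sum]
    refine sum_subset (range_subset_range.2 (by grind)) (fun m _ hm => ?_) |>.trans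
      (sum_congr rfl fun m _ => ?_)
    · rw [Nat.choose_eq_zero_of_lt (by grind)]; simp
    · ring
  rw [sum_congr rfl h, sum_comm]
  simp only [sum_mul]

theorem sum_choose_mul_choose_mul_ascPochhammer_reflect (a b : R) {m n : ℕ} (hm : m ≤ n) :
    ∑ k ∈ range (n + 1), k.choose m * (n.choose k * ((-1) ^ k *
      (ascPochhammer R (n - k)).eval (a + k + 1) * (ascPochhammer R k).eval (a + b + n + 1))) =
      (-1) ^ n * n.choose m * (ascPochhammer R (n - m)).eval (b + m + 1) *
        (ascPochhammer R m).eval (a + b + n + 1) := by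
  set γ := a + b + n + 1
  have hsign (j : ℕ) (hj : j ≤ n - m) : ((-1) ^ (m + j) : R) = (-1) ^ n * (-1) ^ (n - m - j) := by
    obtain ⟨k, rfl⟩ : ∃ k, n = m + j + k := ⟨n - m - j, by omega⟩
    rw [show m + j + k - m - j = k by omega, pow_add _ (m + j), mul_assoc, ← pow_add, ← two_mul,
      pow_mul]
    simp
  have hterm (j : ℕ) (hj : j ∈ range (n - m + 1)) :
      (n - m).choose j * ((-1) ^ (m + j) *
        (ascPochhammer R (n - (m + j))).eval (a + (m + j : ℕ) + 1) *
        (ascPochhammer R (m + j)).eval γ) =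
      (-1) ^ n * (ascPochhammer R m).eval γ * ((n - m).choose j * ((-1) ^ (n - m - j) *
        (ascPochhammer R (n - m - j)).eval (a + m + j + 1) *
        (ascPochhammer R j).eval (γ + m))) := by
    rw [hsign j (by grind), ascPochhammer_eval_add_nat, Nat.sub_add_eq, Nat.cast_add, ← add_assoc a]
    ring
  rw [sum_range_choose_mul_choose _ hm, sum_congr rfl hterm, ← mul_sum,
    sum_choose_mul_neg_one_pow_ascPochhammer, Nat.cast_sub hm,
    show γ + m - (a + m) - (n - m) = b + m + 1 by ring]
  ring

end Pochhammer

theorem jacobiP_neg (n : ℕ) (α β x : ℝ) : jacobiP n α β (-x) = (-1) ^ n * jacobiP n β α x := by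
  simp only [jacobiP, ← ascPochhammer_eval_eq_prod_range, add_comm β α]
  set u := (x - 1) / 2
  have hLHS : ∑ k ∈ range (n + 1), (n.choose k : ℝ) * (ascPochhammer ℝ (n - k)).eval (α + k + 1) *
      (ascPochhammer ℝ k).eval (α + β + n + 1) * ((-x - 1) / 2) ^ k =
      ∑ k ∈ range (n + 1), (n.choose k * ((-1) ^ k * (ascPochhammer ℝ (n - k)).eval (α + k + 1) *
        (ascPochhammer ℝ k).eval (α + β + n + 1))) * (u + 1) ^ k :=
    sum_congr rfl fun k _ => by rw [show (-x - 1) / 2 = -(u + 1) by ring, neg_pow]; ring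
  rw [hLHS, sum_mul_add_one_pow, mul_sum, mul_sum, mul_sum]
  refine sum_congr rfl fun m hm => ?_
  rw [sum_choose_mul_choose_mul_ascPochhammer_reflect α β (mem_range_succ_iff.1 hm)]
  ring

noncomputable def jacobiCoeff (n : ℕ) (α β : ℝ) (m : ℕ) : ℝ :=
  (-1) ^ n / n.factorial * n.choose m * (ascPochhammer ℝ (n - m)).eval (β + m + 1) *
    (ascPochhammer ℝ m).eval (α + β + n + 1) * (-1 / 2) ^ m

theorem jacobiP_eq_sum_jacobiCoeff (n : ℕ) (α β x : ℝ) :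
    jacobiP n α β x = ∑ m ∈ range (n + 1), jacobiCoeff n α β m * (1 + x) ^ m := by
  conv_lhs => rw [← neg_neg x, jacobiP_neg]
  simp only [jacobiP, ← ascPochhammer_eval_eq_prod_range, mul_sum, jacobiCoeff]
  refine sum_congr rfl fun m _ => ?_
  rw [show (-x - 1) / 2 = -1 / 2 * (1 + x) by ring, mul_pow, add_comm β α]
  ring

theorem rpow_mul_jacobiP_eq_sum {x : ℝ} (hx : 0 < 1 + x) (n : ℕ) (α β : ℝ) :
    (1 + x) ^ β * jacobiP n α β x =
      ∑ m ∈ range (n + 1), jacobiCoeff n α β m * (1 + x) ^ (β + m) := by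
  rw [jacobiP_eq_sum_jacobiCoeff, mul_sum]
  refine sum_congr rfl fun m _ => ?_
  rw [rpow_add hx, rpow_natCast]
  ring

theorem Real.Gamma_mul_ascPochhammer_eval {c : ℝ} (hc : 0 < c) (k : ℕ) :
    Gamma c * (ascPochhammer ℝ k).eval c = Gamma (c + k) := by
  induction k with
  | zero => simp
  | succ k ih =>
    rw [ascPochhammer_succ_eval, ← mul_assoc, ih, Nat.cast_succ, ← add_assoc,
      Gamma_add_one (by positivity)]
    ring

theorem Gamma_div_Gamma_mul_jacobiCoeff {m n : ℕ} (hm : m ≤ n) (α : ℝ) {β ρ : ℝ} (hβ : -1 < β)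
    (hβρ : -1 < β + ρ) :
    Gamma (β + m + 1) / Gamma (β + m + ρ + 1) * jacobiCoeff n α β m =
      Gamma (n + β + 1) / Gamma (n + β + ρ + 1) * jacobiCoeff n (α - ρ) (β + ρ) m := by
  have hm0 : (0 : ℝ) ≤ m := m.cast_nonneg
  have h1 : Gamma (n + β + 1) =
      Gamma (β + m + 1) * (ascPochhammer ℝ (n - m)).eval (β + m + 1) := by
    rw [Gamma_mul_ascPochhammer_eval (by linarith), Nat.cast_sub hm]
    ring_nf
  have h2 : Gamma (n + β + ρ + 1) =
      Gamma (β + ρ + m + 1) * (ascPochhammer ℝ (n - m)).eval (β + ρ + m + 1) := by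
    rw [Gamma_mul_ascPochhammer_eval (by linarith), Nat.cast_sub hm]
    ring_nf
  have hΓ : Gamma (β + ρ + m + 1) ≠ 0 := (Gamma_pos_of_pos (by linarith)).ne'
  have hP : (ascPochhammer ℝ (n - m)).eval (β + ρ + m + 1) ≠ 0 :=
    (ascPochhammer_pos _ _ (by linarith)).ne'
  rw [h1, h2, show β + m + ρ + 1 = β + ρ + m + 1 by ring]
  simp only [jacobiCoeff, show α - ρ + (β + ρ) = α + β by ring]
  field_simp

theorem integral_rpow_mul_sub_rpow {p q a : ℝ} (hp : 0 < p) (hq : 0 < q) (ha : 0 < a) :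
    ∫ z in 0..a, z ^ (p - 1) * (a - z) ^ (q - 1) =
      Gamma p * Gamma q / Gamma (p + q) * a ^ (p + q - 1) := by
  have hofReal : ((∫ z in 0..a, z ^ (p - 1) * (a - z) ^ (q - 1) : ℝ) : ℂ) =
      ∫ z in 0..a, (z : ℂ) ^ ((p : ℂ) - 1) * ((a : ℂ) - z) ^ ((q : ℂ) - 1) := by
    rw [← intervalIntegral.integral_ofReal]
    refine intervalIntegral.integral_congr fun z hz => ?_
    rw [uIcc_of_le ha.le] at hz
    simp only [Complex.ofReal_mul, Complex.ofReal_cpow hz.1,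
      Complex.ofReal_cpow (sub_nonneg.2 hz.2)]
    push_cast
    rfl
  apply Complex.ofReal_injective
  rw [hofReal, Complex.betaIntegral_scaled _ _ ha,
    Complex.betaIntegral_eq_Gamma_mul_div _ _ (by simpa using hp) (by simpa using hq)]
  push_cast [Complex.ofReal_cpow ha.le, ← Complex.Gamma_ofReal]
  ring

theorem intervalIntegrable_sub_rpow_mul_sub_rpow {a b s t : ℝ} (hs : -1 < s) (ht : -1 < t)
    (hab : a < b) :
    IntervalIntegrable (fun y => (y - a) ^ s * (b - y) ^ t) volume a b := by
  obtain ⟨c, hac, hcb⟩ := exists_between hab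
  have hleft : IntervalIntegrable (fun y => (y - a) ^ s * (b - y) ^ t) volume a c := by
    have h := (intervalIntegral.intervalIntegrable_rpow' (a := 0) (b := c - a) hs).comp_sub_right a
    rw [zero_add, sub_add_cancel] at h
    refine h.mul_continuousOn (ContinuousOn.rpow_const (by fun_prop) fun y hy => Or.inl ?_)
    rw [uIcc_of_le hac.le] at hy
    linarith [hy.2]
  have hright : IntervalIntegrable (fun y => (y - a) ^ s * (b - y) ^ t) volume c b := by
    have h := (intervalIntegral.intervalIntegrable_rpow' (a := b - c) (b := 0) ht).comp_sub_left b
    rw [sub_sub_cancel, sub_zero] at h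
    refine h.continuousOn_mul (ContinuousOn.rpow_const (by fun_prop) fun y hy => Or.inl ?_)
    rw [uIcc_of_le hcb.le] at hy
    linarith [hy.1]
  exact hleft.trans hright

theorem fracInt_sub_rpow {a ρ s x : ℝ} (hρ : 0 < ρ) (hs : -1 < s) (hax : a < x) :
    fracInt a ρ (fun y => (y - a) ^ s) x =
      Gamma (s + 1) / Gamma (s + ρ + 1) * (x - a) ^ (s + ρ) := by
  have hshift := intervalIntegral.integral_comp_sub_right
    (fun z => z ^ s * ((x - a) - z) ^ (ρ - 1)) (a := a) (b := x) a
  have hbeta := integral_rpow_mul_sub_rpow (p := s + 1) (by linarith) hρ (sub_pos.2 hax)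
  simp only [sub_self, sub_sub_sub_cancel_right] at hshift
  rw [add_sub_cancel_right] at hbeta
  rw [fracInt, hshift, hbeta, show s + 1 + ρ - 1 = s + ρ by ring, add_right_comm s 1 ρ]
  field_simp [(Gamma_pos_of_pos hρ).ne']

theorem fracInt_congr {a ρ x : ℝ} {u v : ℝ → ℝ} (h : EqOn u v (uIoc a x)) :
    fracInt a ρ u x = fracInt a ρ v x := by
  rw [fracInt, fracInt, intervalIntegral.integral_congr_ae (ae_of_all _ fun y hy => by rw [h hy])]

theorem fracInt_sum_const_mul {ι : Type*} (s : Finset ι) (c : ι → ℝ) {f : ι → ℝ → ℝ}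
    {a ρ x : ℝ} (hf : ∀ i ∈ s, IntervalIntegrable (fun y => f i y * (x - y) ^ (ρ - 1)) volume a x) :
    fracInt a ρ (fun y => ∑ i ∈ s, c i * f i y) x = ∑ i ∈ s, c i * fracInt a ρ (f i) x := by
  simp only [fracInt, sum_mul, mul_assoc]
  rw [intervalIntegral.integral_finsetSum fun i hi => (hf i hi).const_mul (c i), mul_sum]
  simp only [intervalIntegral.integral_const_mul]
  exact sum_congr rfl fun i _ => by ring

theorem stmt7 (ρ α β : ℝ) (hρ : 0 < ρ) (hβ : -1 < β) (n : ℕ)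
    (x : ℝ) (hx : x ∈ Set.Ioo (-1 : ℝ) 1) :
    fracInt (-1) ρ (fun y => (1 + y) ^ β * jacobiP n α β y) x
      = Real.Gamma (n + β + 1) / Real.Gamma (n + β + ρ + 1)
          * (1 + x) ^ (β + ρ) * jacobiP n (α - ρ) (β + ρ) x := by
  have hx1 : -1 < x := hx.1
  have hexp (m : ℕ) : -1 < β + m := by linarith [m.cast_nonneg (α := ℝ)]
  calc fracInt (-1) ρ (fun y => (1 + y) ^ β * jacobiP n α β y) x
      = fracInt (-1) ρ (fun y => ∑ m ∈ range (n + 1), jacobiCoeff n α β m * (y - -1) ^ (β + m)) x :=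
        fracInt_congr fun y hy => by
          rw [uIoc_of_le hx1.le] at hy
          rw [sub_neg_eq_add, add_comm y, rpow_mul_jacobiP_eq_sum (by linarith [hy.1])]
    _ = ∑ m ∈ range (n + 1), Gamma (β + m + 1) / Gamma (β + m + ρ + 1) * jacobiCoeff n α β m *
          (1 + x) ^ (β + ρ + m) := by
        rw [fracInt_sum_const_mul _ _ fun m _ =>
          intervalIntegrable_sub_rpow_mul_sub_rpow (hexp m) (by linarith) hx1]
        refine sum_congr rfl fun m _ => ?_
        rw [fracInt_sub_rpow hρ (hexp m) hx1, sub_neg_eq_add, add_comm x,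
          show β + m + ρ = β + ρ + m by ring]
        ring
    _ = Gamma (n + β + 1) / Gamma (n + β + ρ + 1) * (1 + x) ^ (β + ρ) *
          jacobiP n (α - ρ) (β + ρ) x := by
        rw [mul_assoc, rpow_mul_jacobiP_eq_sum (by linarith), mul_sum]
        refine sum_congr rfl fun m hm => ?_
        rw [Gamma_div_Gamma_mul_jacobiCoeff (mem_range_succ_iff.1 hm) α hβ (by linarith)]
        ring
end

section
/- Let μ ∈ (k-1,k) with k ∈ ℕ and let u be a polynomial of degree ≤ N. Then the Caputo fractional derivative ᶜD₋^μ u can be written as (1+x)^{k-μ} φ(x) for some polynomial φ of degree ≤ N-k, and the Riemann–Liouville derivative ᴿD₋^μ u can be written as (1+x)^{-μ} ψ(x) for some polynomial ψ of degree ≤ N. -/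
open Real Filter Set

/-! With `ρ = k - μ > 0`, both derivatives reduce to the fractional integral `I^ρ` of a
polynomial. The substitution `y = a + (x - a) s` shows that `I^ρ` sends `(y - a)^n` to a
Beta-integral multiple of `(x - a)^(ρ + n)`; expanding in powers of `y - a`, it sends a polynomial
of degree `d` to `(x - a)^ρ` times a polynomial of degree `≤ d`. For the Caputo derivative apply
this to `u⁽ᵏ⁾`, of degree `≤ N - k`. For the Riemann–Liouville derivative differentiate `k` times:
`((x - a)^s ψ)' = (x - a)^(s - 1) (s ψ + (x - a) ψ')` keeps the degree and lowers the exponent by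
one, from `k - μ` down to `-μ`. -/

open Polynomial Topology

section FractionalIntegral

variable {a ρ x : ℝ}

lemma fracInt_const_mul (c : ℝ) (u : ℝ → ℝ) :
    fracInt a ρ (fun y => c * u y) x = c * fracInt a ρ u x := by
  simp only [fracInt, mul_assoc, intervalIntegral.integral_const_mul]
  ring

lemma fracInt_finset_sum {ι : Type*} (s : Finset ι) (u : ι → ℝ → ℝ)
    (hu : ∀ i ∈ s, IntervalIntegrable (fun y => u i y * (x - y) ^ (ρ - 1)) MeasureTheory.volume a x) :
    fracInt a ρ (fun y => ∑ i ∈ s, u i y) x = ∑ i ∈ s, fracInt a ρ (u i) x := by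
  simp only [fracInt, Finset.sum_mul, ← Finset.mul_sum]
  rw [intervalIntegral.integral_finsetSum hu]

lemma intervalIntegrable_mul_sub_rpow {u : ℝ → ℝ} (hu : Continuous u) (hρ : 0 < ρ) :
    IntervalIntegrable (fun y => u y * (x - y) ^ (ρ - 1)) MeasureTheory.volume a x := by
  have h := (intervalIntegral.intervalIntegrable_rpow' (a := x - a) (b := 0)
    (by linarith : (-1 : ℝ) < ρ - 1)).comp_sub_left x
  rw [sub_sub_cancel, sub_zero] at h
  exact h.continuousOn_mul hu.continuousOn

lemma fracInt_sub_pow (n : ℕ) (hx : a < x) :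
    fracInt a ρ (fun y => (y - a) ^ n) x
      = (1 / Gamma ρ) * (∫ s in (0 : ℝ)..1, s ^ n * (1 - s) ^ (ρ - 1)) * (x - a) ^ ρ * (x - a) ^ n := by
  have hxa : 0 < x - a := sub_pos.mpr hx
  have hsubst := intervalIntegral.integral_comp_mul_add
    (fun y => (y - a) ^ n * (x - y) ^ (ρ - 1)) (a := 0) (b := 1) hxa.ne' a
  simp only [mul_zero, zero_add, mul_one, sub_add_cancel] at hsubst
  have hintegrand : ∀ s ∈ uIcc (0 : ℝ) 1,
      ((x - a) * s + a - a) ^ n * (x - ((x - a) * s + a)) ^ (ρ - 1)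
        = ((x - a) ^ n * (x - a) ^ (ρ - 1)) * (s ^ n * (1 - s) ^ (ρ - 1)) := by
    intro s hs
    rw [uIcc_of_le zero_le_one] at hs
    rw [add_sub_cancel_right, show x - ((x - a) * s + a) = (x - a) * (1 - s) by ring,
      mul_pow, mul_rpow hxa.le (by linarith [hs.2])]
    ring
  have hrpow : (x - a) ^ ρ = (x - a) * (x - a) ^ (ρ - 1) := by
    conv_lhs => rw [← add_sub_cancel 1 ρ, rpow_add hxa, rpow_one]
  have hI : ∫ y in a..x, (y - a) ^ n * (x - y) ^ (ρ - 1)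
      = (x - a) * ∫ s in (0 : ℝ)..1, ((x - a) * s + a - a) ^ n * (x - ((x - a) * s + a)) ^ (ρ - 1) := by
    rw [hsubst, smul_eq_mul, mul_inv_cancel_left₀ hxa.ne']
  rw [fracInt, hI, intervalIntegral.integral_congr hintegrand, intervalIntegral.integral_const_mul,
    hrpow]
  ring

lemma fracInt_polynomial_eval (hρ : 0 < ρ) (q : ℝ[X]) :
    ∃ φ : ℝ[X], φ.natDegree ≤ q.natDegree ∧
      EqOn (fracInt a ρ (fun y => q.eval y)) (fun x => (x - a) ^ ρ * φ.eval x) (Ioi a) := by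
  set r := taylor a q
  set c : ℕ → ℝ := fun n => (1 / Gamma ρ) * ∫ s in (0 : ℝ)..1, s ^ n * (1 - s) ^ (ρ - 1)
  refine ⟨∑ n ∈ Finset.range (r.natDegree + 1), C (r.coeff n * c n) * (X - C a) ^ n, ?_, ?_⟩
  · refine natDegree_sum_le_of_forall_le _ _ fun n hn => (natDegree_C_mul_le _ _).trans ?_
    rw [natDegree_pow, natDegree_X_sub_C, mul_one, ← natDegree_taylor q a]
    exact Nat.lt_succ_iff.mp (Finset.mem_range.mp hn)
  · intro x hx
    have hq : (fun y => q.eval y) = fun y => ∑ n ∈ Finset.range (r.natDegree + 1),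
        r.coeff n * (y - a) ^ n := by
      ext y
      rw [← taylor_eval_sub (r := a), eval_eq_sum_range]
    rw [hq, fracInt_finset_sum _ _ fun n _ =>
      intervalIntegrable_mul_sub_rpow (by fun_prop) hρ]
    simp only [fracInt_const_mul, fracInt_sub_pow _ hx, eval_finsetSum, eval_mul, eval_C,
      eval_pow, eval_sub, eval_X, Finset.mul_sum, c]
    refine Finset.sum_congr rfl fun n _ => ?_
    ring

end FractionalIntegral

section Derivative

variable {a : ℝ}

lemma natDegree_C_mul_add_X_sub_C_mul_derivative_le (s : ℝ) (ψ : ℝ[X]) :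
    (C s * ψ + (X - C a) * derivative ψ).natDegree ≤ ψ.natDegree := by
  refine (natDegree_add_le _ _).trans (max_le (natDegree_C_mul_le _ _) ?_)
  rcases eq_or_ne ψ.natDegree 0 with hψ | hψ
  · obtain ⟨c, rfl⟩ := natDegree_eq_zero.mp hψ
    simp
  · refine natDegree_mul_le.trans ?_
    have := natDegree_derivative_lt hψ
    rw [natDegree_X_sub_C]
    omega

lemma hasDerivAt_sub_rpow_mul_eval (s : ℝ) (ψ : ℝ[X]) {x : ℝ} (hx : a < x) :
    HasDerivAt (fun y => (y - a) ^ s * ψ.eval y)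
      ((x - a) ^ (s - 1) * (C s * ψ + (X - C a) * derivative ψ).eval x) x := by
  have hxa : 0 < x - a := sub_pos.mpr hx
  have hpow : HasDerivAt (fun y => (y - a) ^ s) (s * (x - a) ^ (s - 1)) x := by
    simpa using ((hasDerivAt_id x).sub_const a).rpow_const (p := s) (Or.inl hxa.ne')
  refine (hpow.mul (ψ.hasDerivAt x)).congr_deriv ?_
  have hsplit : (x - a) ^ s = (x - a) ^ (s - 1) * (x - a) := by
    conv_lhs => rw [← sub_add_cancel s 1, rpow_add hxa, rpow_one]
  simp only [eval_add, eval_mul, eval_C, eval_sub, eval_X, hsplit]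
  ring

lemma iteratedDeriv_eqOn_sub_rpow_mul_eval (k : ℕ) {s : ℝ} {F : ℝ → ℝ} {ψ : ℝ[X]}
    (hF : EqOn F (fun y => (y - a) ^ s * ψ.eval y) (Ioi a)) :
    ∃ ψ' : ℝ[X], ψ'.natDegree ≤ ψ.natDegree ∧
      EqOn (iteratedDeriv k F) (fun y => (y - a) ^ (s - k) * ψ'.eval y) (Ioi a) := by
  induction k with
  | zero => exact ⟨ψ, le_rfl, by simpa using hF⟩
  | succ k ih =>
    obtain ⟨ψ', hdeg, hψ'⟩ := ih
    refine ⟨C (s - k) * ψ' + (X - C a) * derivative ψ',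
      (natDegree_C_mul_add_X_sub_C_mul_derivative_le _ _).trans hdeg, fun x hx => ?_⟩
    have hnear : iteratedDeriv k F =ᶠ[𝓝 x] fun y => (y - a) ^ (s - k) * ψ'.eval y :=
      eventually_of_mem (Ioi_mem_nhds hx) hψ'
    rw [iteratedDeriv_succ, hnear.deriv_eq, (hasDerivAt_sub_rpow_mul_eval _ ψ' hx).deriv,
      Nat.cast_succ, sub_add_eq_sub_sub]

end Derivative

lemma iteratedDeriv_polynomial_eval {𝕜 : Type*} [NontriviallyNormedField 𝕜] (k : ℕ) (p : 𝕜[X]) :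
    iteratedDeriv k (fun y => p.eval y) = fun y => (derivative^[k] p).eval y := by
  induction k generalizing p with
  | zero => rfl
  | succ k ih =>
    rw [iteratedDeriv_succ', funext fun y => p.deriv (x := y), ih, Function.iterate_succ_apply]

theorem stmt10 (k N : ℕ) (μ : ℝ) (hμ : (k : ℝ) - 1 < μ ∧ μ < k)
    (p : Polynomial ℝ) (hp : p.natDegree ≤ N) :
    (∃ φ : Polynomial ℝ, φ.natDegree ≤ N - k ∧
        ∀ x ∈ Set.Ioo (-1 : ℝ) 1,
          caputoD k μ (-1) (fun y => p.eval y) x = (1 + x) ^ ((k : ℝ) - μ) * φ.eval x) ∧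
    (∃ ψ : Polynomial ℝ, ψ.natDegree ≤ N ∧
        ∀ x ∈ Set.Ioo (-1 : ℝ) 1,
          rlD k μ (-1) (fun y => p.eval y) x = (1 + x) ^ (-μ) * ψ.eval x) := by
  have hρ : 0 < (k : ℝ) - μ := sub_pos.mpr hμ.2
  have hbase : ∀ x : ℝ, x - -1 = 1 + x := fun x => by ring
  constructor
  · obtain ⟨φ, hdeg, hφ⟩ := fracInt_polynomial_eval (a := -1) hρ (derivative^[k] p)
    refine ⟨φ, hdeg.trans <| (natDegree_iterate_derivative p k).trans (Nat.sub_le_sub_right hp k),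
      fun x hx => ?_⟩
    rw [caputoD, iteratedDeriv_polynomial_eval, hφ hx.1]
    dsimp only
    rw [hbase]
  · obtain ⟨ψ₀, hdeg₀, hψ₀⟩ := fracInt_polynomial_eval (a := -1) hρ p
    obtain ⟨ψ, hdeg, hψ⟩ := iteratedDeriv_eqOn_sub_rpow_mul_eval k hψ₀
    refine ⟨ψ, hdeg.trans (hdeg₀.trans hp), fun x hx => ?_⟩
    rw [rlD, hψ hx.1]
    dsimp only
    rw [hbase, sub_sub_cancel_left]
end

section
/- Let {x_j}_{j=0}^N be distinct nodes in [-1,1] with x_0 = -1, let {h_j} be the associated Lagrange basis polynomials of degree N, and for μ ∈ (0,1) suppose {Q_j^μ}_{j=1}^N ⊂ P_N satisfy the Caputo–Birkhoff conditions ᶜD₋^μ Q_j^μ(x_i) = δ_{ij} for 1 ≤ i ≤ N and Q_j^μ(-1) = 0. Define matrices D ∈ ℝ^{N×N} with D_{ij} = ᶜD₋^μ h_j(x_i) (1 ≤ i,j ≤ N) and Q ∈ ℝ^{N×N} with Q_{lj} = Q_j^μ(x_l). Then Q·D = D·Q = I_N, i.e. Q is the inverse of the interior Caputo fractional pseudospectral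 differentiation matrix. -/
open Real Filter Set MeasureTheory

lemma integ_aux (p : Polynomial ℝ) (a t r : ℝ) (hr : -1 < r) :
    IntervalIntegrable (fun y => p.eval y * (t - y) ^ r) volume a t := by
  have h1 : IntervalIntegrable (fun y : ℝ => (t - y) ^ r) volume a t := by
    have h0 := (intervalIntegral.intervalIntegrable_rpow' (a := t - a) (b := t - t) hr).comp_sub_left t
    simpa using h0
  exact h1.continuousOn_mul (p.continuous_aeval).continuousOn

lemma caputo_poly (μ : ℝ) (hμ : μ ∈ Set.Ioo (0:ℝ) 1) (p : Polynomial ℝ) (t : ℝ) :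
    caputoD 1 μ (-1) (fun y => p.eval y) t =
      (1 / Real.Gamma (1 - μ)) * ∫ y in (-1:ℝ)..t, p.derivative.eval y * (t - y) ^ (-μ) := by
  unfold caputoD fracInt
  congr 1
  · norm_num
  · apply intervalIntegral.integral_congr
    intro y _
    simp [iteratedDeriv_one, Polynomial.deriv]


lemma caputo_sum (μ : ℝ) (hμ : μ ∈ Set.Ioo (0:ℝ) 1) {ι : Type*} (s : Finset ι)
    (c : ι → ℝ) (p : ι → Polynomial ℝ) (t : ℝ) :
    caputoD 1 μ (-1) (fun y => (∑ l ∈ s, c l • p l).eval y) t =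
      ∑ l ∈ s, c l * caputoD 1 μ (-1) (fun y => (p l).eval y) t := by
  rw [caputo_poly μ hμ]
  have hμ1 : (-1:ℝ) < -μ := by linarith [hμ.2]
  have : (∫ y in (-1:ℝ)..t, (∑ l ∈ s, c l • p l).derivative.eval y * (t - y) ^ (-μ))
      = ∑ l ∈ s, c l * ∫ y in (-1:ℝ)..t, (p l).derivative.eval y * (t - y) ^ (-μ) := by
    rw [show (fun y => (∑ l ∈ s, c l • p l).derivative.eval y * (t - y) ^ (-μ))
        = fun y => ∑ l ∈ s, c l * ((p l).derivative.eval y * (t - y) ^ (-μ)) from ?_]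
    · rw [intervalIntegral.integral_finset_sum (fun l _ => ?_)]
      · congr 1; ext l; exact intervalIntegral.integral_const_mul _ _
      · exact (integ_aux ((p l).derivative) _ _ _ hμ1).const_mul _
    · funext y
      simp [Polynomial.derivative_sum, Polynomial.eval_finset_sum, Finset.sum_mul, mul_assoc]
  rw [this, Finset.mul_sum]
  refine Finset.sum_congr rfl fun l _ => ?_
  rw [caputo_poly μ hμ]
  ring

theorem stmt16 (N : ℕ) (hN : 0 < N) (μ : ℝ) (hμ : μ ∈ Set.Ioo (0 : ℝ) 1)
    (x : Fin (N + 1) → ℝ) (hxinj : Function.Injective x) (hx0 : x 0 = -1)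
    (hxmem : ∀ i, x i ∈ Set.Icc (-1 : ℝ) 1)
    (h : Fin (N + 1) → Polynomial ℝ) (hdeg : ∀ j, (h j).natDegree ≤ N)
    (hlag : ∀ i j, (h j).eval (x i) = if i = j then 1 else 0)
    (Q : Fin N → Polynomial ℝ) (hQdeg : ∀ j, (Q j).natDegree ≤ N)
    (hQ0 : ∀ j, (Q j).eval (-1) = 0)
    (hQB : ∀ i j : Fin N,
      caputoD 1 μ (-1) (fun y => (Q j).eval y) (x i.succ) = if i = j then 1 else 0) :
    (Matrix.of fun l j : Fin N => (Q j).eval (x l.succ)) *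
      (Matrix.of fun i j : Fin N =>
        caputoD 1 μ (-1) (fun y => (h j.succ).eval y) (x i.succ)) = 1 ∧
    (Matrix.of fun i j : Fin N =>
        caputoD 1 μ (-1) (fun y => (h j.succ).eval y) (x i.succ)) *
      (Matrix.of fun l j : Fin N => (Q j).eval (x l.succ)) = 1 := by
  -- interpolation identity
  have hinterp : ∀ j : Fin N,
      Q j = ∑ l : Fin (N + 1), ((Q j).eval (x l)) • h l := by
    intro j
    have hR : (Q j - ∑ l : Fin (N + 1), ((Q j).eval (x l)) • h l) = 0 := by
      apply Polynomial.eq_zero_of_natDegree_lt_card_of_eval_eq_zero _ hxinj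
      · intro i
        simp only [Polynomial.eval_sub, Polynomial.eval_finset_sum, Polynomial.eval_smul,
          smul_eq_mul, hlag]
        rw [Finset.sum_eq_single i]
        · simp
        · intro b _ hb; simp [Ne.symm hb]
        · simp
      · have h1 : (Q j - ∑ l : Fin (N + 1), ((Q j).eval (x l)) • h l).natDegree ≤ N := by
          apply le_trans (Polynomial.natDegree_sub_le _ _)
          apply max_le (hQdeg j)
          apply le_trans (Polynomial.natDegree_sum_le _ _)
          apply Finset.sup_le
          intro l _
          exact le_trans (Polynomial.natDegree_smul_le _ _) (hdeg l)
        simpa [Fintype.card_fin] using lt_of_le_of_lt h1 (Nat.lt_succ_self N)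
    linear_combination (norm := module) hR
  -- the key identity: D * Q = 1
  have key : (Matrix.of fun i j : Fin N =>
        caputoD 1 μ (-1) (fun y => (h j.succ).eval y) (x i.succ)) *
      (Matrix.of fun l j : Fin N => (Q j).eval (x l.succ)) = 1 := by
    ext i j
    rw [Matrix.mul_apply]; simp only [Matrix.of_apply]
    have hQj : caputoD 1 μ (-1) (fun y => (Q j).eval y) (x i.succ)
        = ∑ l : Fin N, caputoD 1 μ (-1) (fun y => (h l.succ).eval y) (x i.succ)
            * (Q j).eval (x l.succ) := by
      conv_lhs => rw [hinterp j]
      rw [caputo_sum μ hμ]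
      rw [Fin.sum_univ_succ]
      rw [hx0, hQ0 j]
      simp only [zero_mul, zero_add]
      exact Finset.sum_congr rfl fun l _ => mul_comm _ _
    rw [← hQj, hQB i j]
    by_cases hij : i = j <;> simp [hij, Matrix.one_apply]
  refine ⟨?_, key⟩
  exact mul_eq_one_comm.mp key
end

section
/- Let k ∈ ℕ, let {x_j}_{j=0}^N be distinct nodes with associated Lagrange basis polynomials {h_j} ⊂ P_N, and let μ ∈ (0,1). Define the matrices (ᶜD^{(k+μ)})_{ij} = ᶜD₋^{k+μ} h_j(x_i), (ᶜD^{(μ)})_{ij} = ᶜD₋^μ h_j(x_i), and D^{(k)}_{ij} = h_j^{(k)}(x_i), all of size (N+1)×(N+1). Then ᶜD^{(k+μ)} = ᶜD^{(μ)} · D^{(k)}, i.e. the Caputo fractional differentiation matrix of order k+μ factors as the Caputo matrix of order μ times the k-th order differentiation matrix. -/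
open Real Filter Set

private lemma iteratedDeriv_polyEval (n : ℕ) (p : Polynomial ℝ) :
    iteratedDeriv n (fun y => p.eval y) = fun y => (Polynomial.derivative^[n] p).eval y := by
  induction n generalizing p with
  | zero => simp [iteratedDeriv_zero]
  | succ n ih =>
    rw [iteratedDeriv_succ']
    have hd : deriv (fun y => p.eval y) = fun y => (Polynomial.derivative p).eval y :=
      funext fun y => Polynomial.deriv p
    rw [hd, ih, Function.iterate_succ_apply]

private lemma poly_rpow_integrable (P : Polynomial ℝ) {r : ℝ} (hr : -1 < r) (a d : ℝ) :
    IntervalIntegrable (fun y => (d - y) ^ r * P.eval y) MeasureTheory.volume a d := by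
  have h1 : IntervalIntegrable (fun y => (d - y) ^ r) MeasureTheory.volume a d := by
    have := (intervalIntegral.intervalIntegrable_rpow' hr (a := d - a) (b := d - d)).comp_sub_left d
    simpa using this
  exact h1.mul_continuousOn P.continuous.continuousOn

theorem stmt17 (N k : ℕ) (hk : 0 < k) (μ : ℝ) (hμ : μ ∈ Set.Ioo (0 : ℝ) 1)
    (x : Fin (N + 1) → ℝ) (hxinj : Function.Injective x)
    (hxmem : ∀ i, x i ∈ Set.Icc (-1 : ℝ) 1)
    (h : Fin (N + 1) → Polynomial ℝ) (hdeg : ∀ j, (h j).natDegree ≤ N)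
    (hlag : ∀ i j, (h j).eval (x i) = if i = j then 1 else 0) :
    (Matrix.of fun i j : Fin (N + 1) =>
        caputoD (k + 1) ((k : ℝ) + μ) (-1) (fun y => (h j).eval y) (x i))
      = (Matrix.of fun i j : Fin (N + 1) =>
          caputoD 1 μ (-1) (fun y => (h j).eval y) (x i)) *
        (Matrix.of fun i j : Fin (N + 1) =>
          iteratedDeriv k (fun y => (h j).eval y) (x i)) := by
  obtain ⟨hμ0, hμ1⟩ := hμ
  have hrμ : (-1 : ℝ) < -μ := by linarith
  ext i j
  simp only [Matrix.mul_apply, Matrix.of_apply]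
  set q := Polynomial.derivative^[k] (h j) with hq
  set c : Fin (N + 1) → ℝ := fun l => q.eval (x l) with hc
  -- interpolation of q
  have hqdeg : q.natDegree ≤ N :=
    le_trans (Polynomial.natDegree_iterate_derivative _ _) (le_trans (Nat.sub_le _ _) (hdeg j))
  have hrep : q = ∑ l, Polynomial.C (c l) * h l := by
    have hzero : q - ∑ l, Polynomial.C (c l) * h l = 0 := by
      apply Polynomial.eq_zero_of_natDegree_lt_card_of_eval_eq_zero _ hxinj
      · intro i
        simp only [Polynomial.eval_sub, Polynomial.eval_finset_sum, Polynomial.eval_mul,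
          Polynomial.eval_C, hlag]
        simp [hc]
      · have h2 : (∑ l, Polynomial.C (c l) * h l).natDegree ≤ N := by
          apply Polynomial.natDegree_sum_le_of_forall_le
          intro l _
          exact le_trans Polynomial.natDegree_mul_le (by simpa using hdeg l)
        have h3 := le_trans (Polynomial.natDegree_sub_le q (∑ l, Polynomial.C (c l) * h l))
          (max_le hqdeg h2)
        calc _ ≤ N := h3
          _ < Fintype.card (Fin (N + 1)) := by simp
    linear_combination (norm := ring_nf) hzero
  -- rewrite both sides
  have hB : ∀ l, iteratedDeriv k (fun y => (h j).eval y) (x l) = c l := by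
    intro l; rw [iteratedDeriv_polyEval]
  simp only [hB]
  have hL : iteratedDeriv (k + 1) (fun y => (h j).eval y)
      = fun y => (Polynomial.derivative q).eval y := by
    rw [iteratedDeriv_polyEval, Function.iterate_succ_apply']
  have hone : iteratedDeriv 1 = fun (f : ℝ → ℝ) => deriv f := by
    funext f; exact iteratedDeriv_one
  have hderivq : Polynomial.derivative q = ∑ l, Polynomial.C (c l) * Polynomial.derivative (h l) := by
    rw [hrep, map_sum]
    simp [Polynomial.derivative_C_mul]
  have hexp : ((k : ℝ) + 1) - ((k : ℝ) + μ) = 1 - μ := by ring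
  simp only [caputoD, fracInt, hL, hone]
  have hcast : (((k + 1 : ℕ) : ℝ)) - ((k : ℝ) + μ) = 1 - μ := by push_cast; ring
  rw [hcast]
  have hd1 : ∀ (p : Polynomial ℝ), deriv (fun y => p.eval y)
      = fun y => (Polynomial.derivative p).eval y :=
    fun p => funext fun y => Polynomial.deriv p
  simp only [Nat.cast_one, hd1]
  -- now pure integral computation
  set w : ℝ → ℝ := fun y => (x i - y) ^ (1 - μ - 1) with hw
  have hwr : (1 : ℝ) - μ - 1 = -μ := by ring
  have hint : ∀ l : Fin (N + 1), IntervalIntegrable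
      (fun y => (Polynomial.derivative (h l)).eval y * w y) MeasureTheory.volume (-1) (x i) := by
    intro l
    have := poly_rpow_integrable (Polynomial.derivative (h l)) (hwr ▸ hrμ : (-1:ℝ) < 1 - μ - 1)
      (-1) (x i)
    simpa [hw, mul_comm] using this
  have hintegrand : (fun y => (Polynomial.derivative q).eval y * w y)
      = fun y => ∑ l, c l * ((Polynomial.derivative (h l)).eval y * w y) := by
    funext y
    rw [hderivq]
    simp [Polynomial.eval_finset_sum, Finset.sum_mul, mul_assoc]
  rw [show (∫ y in (-1:ℝ)..x i, (Polynomial.derivative q).eval y * (x i - y) ^ (1 - μ - 1))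
      = ∫ y in (-1:ℝ)..x i, ∑ l, c l * ((Polynomial.derivative (h l)).eval y * w y) from by
    rw [← hintegrand]]
  rw [intervalIntegral.integral_finset_sum (fun l _ => (hint l).const_mul (c l))]
  rw [Finset.mul_sum, Finset.sum_congr rfl]
  intro l _
  rw [intervalIntegral.integral_const_mul]
  ring
end
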